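/- arXiv:1806.01229 — 6 statements merged into one kernel-verified Lean document; each statement's English description precedes it below -/
import Mathlib

section
/- Let γ < 0 and k a positive integer. Then (1/√k)·∑_{i=1}^{k-1} exp(2iγ/√k) → 1/(2|γ_n|) in the sense that for a sequence γ_n < 0 with γ_n·√k_n → -∞ and γ_n → 0, the quantity |γ_n|·(1/√{k_n})·∑_{i=1}^{k_n-1} exp(2iγ_n/√{k_n}) tends to 1/2 as n → ∞. -/
/-!
With `x = 2|γ|/√k` the sum is the geometric sum `∑_{i=1}^{k-1} e^{-ix} = (e^{-x} - e^{-kx})/(1 - e^{-x})`,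
so the quantity equals `(x / (1 - e^{-x})) (e^{-x} - e^{-kx}) / 2`. Since `γ → 0` and `γ√k → -∞`,
`x → 0` and `kx = 2|γ|√k → ∞`; the first factor is an inverse difference quotient of `exp` at `0`,
so it tends to `1`, while `e^{-x} → 1` and `e^{-kx} → 0`.
-/

open Filter Topology Finset Real

theorem tendsto_div_one_sub_exp_neg :
    Tendsto (fun x : ℝ => x / (1 - exp (-x))) (𝓝[≠] 0) (𝓝 1) := by
  have hderiv : HasDerivAt (fun t : ℝ => 1 - exp (-t)) 1 0 := by
    simpa using ((hasDerivAt_exp _).comp 0 (hasDerivAt_neg 0)).const_sub 1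
  have hslope := (hasDerivAt_iff_tendsto_slope.1 hderiv).inv₀ one_ne_zero
  rw [inv_one] at hslope
  refine hslope.congr fun x => ?_
  simp [slope_def_field]

theorem sum_Ico_one_exp_neg_mul {x : ℝ} (hx : 0 < x) {k : ℕ} (hk : 1 ≤ k) :
    ∑ i ∈ Ico 1 k, exp (-(i * x)) = (exp (-x) - exp (-(k * x))) / (1 - exp (-x)) := by
  have hpow (n : ℕ) : exp (-(n * x)) = exp (-x) ^ n := by
    rw [← exp_nat_mul, mul_neg]
  have hne : exp (-x) ≠ 1 := (exp_lt_one_iff.2 (neg_lt_zero.2 hx)).ne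
  simp only [hpow, geom_sum_Ico' hne hk, pow_one]

theorem tendsto_div_sqrt_natCast_of_tendsto_zero {α : Type*} {l : Filter α} {f : α → ℝ}
    {k : α → ℕ} (hf : Tendsto f l (𝓝 0)) : Tendsto (fun a => f a / √(k a)) l (𝓝 0) := by
  refine squeeze_zero_norm (fun a => ?_) (tendsto_zero_iff_norm_tendsto_zero.1 hf)
  have hinv : (√(k a))⁻¹ ≤ 1 := by
    rw [← sqrt_inv]
    exact sqrt_le_one.2 (Nat.cast_inv_le_one _)
  rw [div_eq_mul_inv, norm_mul, norm_inv, norm_of_nonneg (sqrt_nonneg _)]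
  exact mul_le_of_le_one_right (norm_nonneg _) hinv

theorem tendsto_mul_sum_Ico_exp_neg_mul {α : Type*} {l : Filter α} {x : α → ℝ} {k : α → ℕ}
    (hx : Tendsto x l (𝓝 0)) (hxk : Tendsto (fun a => x a * k a) l atTop) :
    Tendsto (fun a => x a * ∑ i ∈ Ico 1 (k a), exp (-(i * x a))) l (𝓝 1) := by
  have hpos : ∀ᶠ a in l, 0 < x a ∧ 1 ≤ k a := (hxk.eventually_gt_atTop 0).mono fun a h => by
    rcases pos_and_pos_or_neg_and_neg_of_mul_pos h with ⟨hx, hk⟩ | ⟨_, hk⟩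
    · exact ⟨hx, by exact_mod_cast hk⟩
    · exact absurd hk (Nat.cast_nonneg _).not_gt
  have hx' : Tendsto x l (𝓝[≠] 0) :=
    tendsto_nhdsWithin_of_tendsto_nhds_of_eventually_within _ hx (hpos.mono fun a h => h.1.ne')
  have hexp : Tendsto (fun a => exp (-x a)) l (𝓝 1) := by
    have h := (continuous_exp.tendsto (-0)).comp hx.neg
    rwa [neg_zero, exp_zero] at h
  have hexpk : Tendsto (fun a => exp (-(k a * x a))) l (𝓝 0) := by
    refine (tendsto_exp_atBot.comp (tendsto_neg_atTop_atBot.comp hxk)).congr fun a => ?_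
    simp only [Function.comp_apply, mul_comm]
  have hlim := (tendsto_div_one_sub_exp_neg.comp hx').mul (hexp.sub hexpk)
  rw [sub_zero, mul_one] at hlim
  refine hlim.congr' (hpos.mono fun a ⟨hxa, hka⟩ => ?_)
  simp only [Function.comp_apply, sum_Ico_one_exp_neg_mul hxa hka]
  ring

open Filter in
theorem geom_sum_variance_limit_general (γ : ℕ → ℝ) (k : ℕ → ℕ)
    (hγneg : ∀ n, γ n < 0) (hγ0 : Tendsto γ atTop (nhds 0))
    (hkγ : Tendsto (fun n => γ n * Real.sqrt (k n)) atTop atBot) :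
    Tendsto (fun n => |γ n| * ((1 / Real.sqrt (k n)) *
        ∑ i ∈ Finset.Icc 1 (k n - 1), Real.exp (2 * i * γ n / Real.sqrt (k n))))
      atTop (nhds (1/2)) := by
  set x : ℕ → ℝ := fun n => -2 * γ n / √(k n)
  have hx : Tendsto x atTop (𝓝 0) :=
    tendsto_div_sqrt_natCast_of_tendsto_zero (by simpa using hγ0.const_mul (-2))
  have hxk : Tendsto (fun n => x n * k n) atTop atTop := by
    refine (hkγ.const_mul_atBot_of_neg (by norm_num : (-2 : ℝ) < 0)).congr fun n => ?_
    simp only [x]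
    rw [div_mul_eq_mul_div, mul_div_assoc, div_sqrt]
    ring
  refine ((tendsto_mul_sum_Ico_exp_neg_mul hx hxk).div_const 2).congr fun n => ?_
  have hIcc : Icc 1 (k n - 1) = Ico 1 (k n) := by
    ext i; simp only [mem_Icc, mem_Ico]; omega
  have hterm (i : ℕ) : exp (2 * i * γ n / √(k n)) = exp (-(i * x n)) := by
    simp only [x]
    ring_nf
  simp_rw [hIcc, abs_of_neg (hγneg n), hterm]
  simp only [x]
  ring

open Filter in
theorem geom_sum_variance_limit (γ : ℕ → ℝ) (k : ℕ → ℕ)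
    (hγneg : ∀ n, γ n < 0) (hγ0 : Tendsto γ atTop (nhds 0))
    (hkpos : ∀ n, 0 < k n) (hk : Tendsto k atTop atTop)
    (hkγ : Tendsto (fun n => γ n * Real.sqrt (k n)) atTop atBot) :
    Tendsto (fun n => |γ n| * ((1 / Real.sqrt (k n)) *
        ∑ i ∈ Finset.Icc 1 (k n - 1), Real.exp (2 * i * γ n / Real.sqrt (k n))))
      atTop (nhds (1/2)) :=
  geom_sum_variance_limit_general γ k hγneg hγ0 hkγ
end

section
/- Let γ_n < 0 with γ_n → 0 and let k_n → ∞ with √{k_n}·γ_n → -∞. Then γ_n²·(1/k_n)·∑_{j=1}^{k_n} j·exp(jγ_n/√{k_n}) → 1 as n → ∞. -/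
/-!
With `y = γ / √k < 0` and `q = exp y`, the sum is the arithmetico-geometric sum
`∑_{j=1}^k j q^j = q (1 - q^k (1 + k (1 - q))) / (q - 1)^2`, and `γ^2 / k = y^2`.
As `y → 0⁻` we have `y / (q - 1) → 1` (the derivative of `exp` at `0`) and `q → 1`, while the
remainder is squeezed: `0 ≤ q^k (1 + k (1 - q)) ≤ (1 - k y) exp (k y) → 0` because
`k y = √k γ → -∞`.
-/

open Filter Topology Finset Real

theorem sq_sub_one_mul_sum_Icc_mul_pow {R : Type*} [CommRing R] (q : R) (k : ℕ) :
    (q - 1) ^ 2 * ∑ j ∈ Icc 1 k, (j : R) * q ^ j = q * (1 - q ^ k * (1 + k * (1 - q))) := by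
  induction k with
  | zero => simp
  | succ k ih =>
    rw [sum_Icc_succ_top (by omega), mul_add, ih]
    push_cast
    ring

theorem tendsto_div_exp_sub_one_nhdsNE_zero :
    Tendsto (fun y => y / (exp y - 1)) (𝓝[≠] 0) (𝓝 1) := by
  have hslope := hasDerivAt_iff_tendsto_slope_zero.mp (hasDerivAt_exp 0)
  simpa [div_eq_mul_inv, mul_comm] using hslope.inv₀ (exp_ne_zero 0)

theorem exp_pow_mul_one_add_mul_one_sub_exp_le (y : ℝ) (k : ℕ) :
    exp y ^ k * (1 + k * (1 - exp y)) ≤ (1 - k * y) * exp (k * y) := by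
  have hk : k * (1 - exp y) ≤ k * -y := by
    gcongr
    linarith [add_one_le_exp y]
  rw [← exp_nat_mul, mul_comm]
  gcongr
  linarith

theorem tendsto_one_sub_mul_exp_atBot : Tendsto (fun t => (1 - t) * exp t) atBot (𝓝 0) := by
  have h := tendsto_exp_atBot.add
    ((tendsto_pow_mul_exp_neg_atTop_nhds_zero 1).comp tendsto_neg_atBot_atTop)
  simpa [sub_mul, Function.comp_def, ← sub_eq_add_neg] using h

theorem tendsto_exp_pow_mul_one_add_mul_one_sub_exp {ι : Type*} {l : Filter ι} {y : ι → ℝ}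
    {k : ι → ℕ} (hy : ∀ᶠ n in l, y n ≤ 0) (hky : Tendsto (fun n => k n * y n) l atBot) :
    Tendsto (fun n => exp (y n) ^ k n * (1 + k n * (1 - exp (y n)))) l (𝓝 0) := by
  refine tendsto_of_tendsto_of_tendsto_of_le_of_le' tendsto_const_nhds
    (tendsto_one_sub_mul_exp_atBot.comp hky) ?_
    (Eventually.of_forall fun n => exp_pow_mul_one_add_mul_one_sub_exp_le (y n) (k n))
  filter_upwards [hy] with n hyn
  have : 0 ≤ 1 - exp (y n) := sub_nonneg.mpr (exp_le_one_iff.mpr hyn)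
  positivity

theorem tendsto_sq_mul_sum_Icc_mul_exp_mul {ι : Type*} {l : Filter ι} {y : ι → ℝ} {k : ι → ℕ}
    (hy : Tendsto y l (𝓝[<] 0)) (hky : Tendsto (fun n => k n * y n) l atBot) :
    Tendsto (fun n => y n ^ 2 * ∑ j ∈ Icc 1 (k n), (j : ℝ) * exp (j * y n)) l (𝓝 1) := by
  have hy_neg : ∀ᶠ n in l, y n < 0 := hy self_mem_nhdsWithin
  have hy0 : Tendsto y l (𝓝 0) := tendsto_nhds_of_tendsto_nhdsWithin hy
  have hslope : Tendsto (fun n => y n / (exp (y n) - 1)) l (𝓝 1) :=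
    tendsto_div_exp_sub_one_nhdsNE_zero.comp (tendsto_nhdsWithin_mono_right
      (fun _ h => ne_of_lt h) hy)
  have hexp : Tendsto (fun n => exp (y n)) l (𝓝 1) := by
    rw [← exp_zero]
    exact (continuous_exp.tendsto 0).comp hy0
  have hrem := tendsto_exp_pow_mul_one_add_mul_one_sub_exp
    (hy_neg.mono fun _ h => h.le) hky
  have hlim := (hslope.pow 2).mul (hexp.mul (hrem.const_sub 1))
  rw [one_pow, one_mul, sub_zero, mul_one] at hlim
  refine hlim.congr' ?_
  filter_upwards [hy_neg] with n hyn
  have hq : exp (y n) - 1 ≠ 0 := sub_ne_zero.mpr (exp_lt_one_iff.mpr hyn).ne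
  have hsum := sq_sub_one_mul_sum_Icc_mul_pow (exp (y n)) (k n)
  simp_rw [exp_nat_mul]
  rw [← hsum]
  field_simp

theorem abs_div_sqrt_natCast_le (a : ℝ) (n : ℕ) : |a / √n| ≤ |a| := by
  rcases n.eq_zero_or_pos with rfl | hn
  · simp
  · rw [abs_div, abs_of_nonneg (sqrt_nonneg _)]
    exact div_le_self (abs_nonneg a) (one_le_sqrt.mpr (by exact_mod_cast hn))

open Filter in
theorem weighted_geom_sum_limit_general (γ : ℕ → ℝ) (k : ℕ → ℕ)
    (hγ0 : Tendsto γ atTop (nhds 0))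
    (hkγ : Tendsto (fun n => Real.sqrt (k n) * γ n) atTop atBot) :
    Tendsto (fun n => (γ n) ^ 2 * ((1 / (k n : ℝ)) *
        ∑ j ∈ Finset.Icc 1 (k n), (j : ℝ) * Real.exp (j * γ n / Real.sqrt (k n))))
      atTop (nhds 1) := by
  have hky : (fun n => (k n : ℝ) * (γ n / √(k n))) = fun n => √(k n) * γ n := by
    ext n
    rw [mul_div_left_comm, div_sqrt, mul_comm]
  have hy_neg : ∀ᶠ n in atTop, γ n / √(k n) < 0 := by
    filter_upwards [hkγ.eventually_lt_atBot 0] with n hn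
    have hsqrt : 0 < √(k n) := (sqrt_nonneg _).lt_of_ne fun h => by simp [← h] at hn
    exact div_neg_of_neg_of_pos (neg_of_mul_neg_right hn hsqrt.le) hsqrt
  have hy0 : Tendsto (fun n => γ n / √(k n)) atTop (𝓝 0) :=
    squeeze_zero_norm (fun n => abs_div_sqrt_natCast_le (γ n) (k n)) (by simpa using hγ0.abs)
  convert tendsto_sq_mul_sum_Icc_mul_exp_mul (tendsto_nhdsWithin_iff.mpr ⟨hy0, hy_neg⟩)
    (hky ▸ hkγ) using 2 with n
  rw [div_pow, sq_sqrt (Nat.cast_nonneg _)]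
  simp_rw [mul_div_assoc]
  ring

open Filter in
theorem weighted_geom_sum_limit (γ : ℕ → ℝ) (k : ℕ → ℕ)
    (hγneg : ∀ n, γ n < 0) (hγ0 : Tendsto γ atTop (nhds 0))
    (hk : Tendsto k atTop atTop)
    (hkγ : Tendsto (fun n => Real.sqrt (k n) * γ n) atTop atBot) :
    Tendsto (fun n => (γ n) ^ 2 * ((1 / (k n : ℝ)) *
        ∑ j ∈ Finset.Icc 1 (k n), (j : ℝ) * Real.exp (j * γ n / Real.sqrt (k n))))
      atTop (nhds 1) :=
  weighted_geom_sum_limit_general γ k hγ0 hkγ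
end

section
/- There is a constant C > 0 such that for all integers k ≥ 2, all reals γ > 0 and all integers i with 1 ≤ i ≤ k−1: |(e^{√k·γ} − e^{iγ/√k})/(e^{γ/√k} − 1) − (√k/γ)·e^{√k·γ}| ≤ C·((√k/γ)·e^{iγ/√k} + e^{√k·γ}). -/
lemma tail_geom_key (x A B : ℝ) (hx : 0 < x) (hA : 0 < A) (hB : 0 < B) :
    |(A - B) / (Real.exp x - 1) - A / x| ≤ B / x + A := by
  have hx1 : x ≤ Real.exp x - 1 := by nlinarith [Real.add_one_le_exp x]
  set u := Real.exp x - 1 with hu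
  have he : 0 < u := lt_of_lt_of_le hx hx1
  have h2 : u - x ≤ x * u := by
    have h := Real.add_one_le_exp (-x)
    rw [Real.exp_neg] at h
    have hep : 0 < Real.exp x := Real.exp_pos x
    have h' : (1 - x) * Real.exp x ≤ 1 := by
      calc (1 - x) * Real.exp x ≤ (Real.exp x)⁻¹ * Real.exp x :=
            mul_le_mul_of_nonneg_right (by linarith) hep.le
        _ = 1 := inv_mul_cancel₀ hep.ne'
    simp only [hu]; nlinarith
  rw [abs_le]
  constructor
  · rw [neg_le, neg_sub]
    have e1 : A / x - (A - B) / u = (A * (u - x) + B * x) / (x * u) := by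
      field_simp; ring
    have e2 : B / x + A = (B * u + A * (x * u)) / (x * u) := by
      field_simp
    rw [e1, e2]
    apply div_le_div_of_nonneg_right ?_ (by positivity : (0:ℝ) ≤ x * u)
    nlinarith [mul_le_mul_of_nonneg_left h2 hA.le,
      mul_le_mul_of_nonneg_left hx1 hB.le]
  · have h3 : (A - B) / u ≤ A / u :=
      div_le_div_of_nonneg_right (by linarith) he.le
    have h4 : A / u ≤ A / x := by gcongr
    have h5 : 0 ≤ B / x + A := by positivity
    have h6 : 0 < A / x := by positivity
    linarith

theorem tail_geom_sum_taylor_bound :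
    ∃ C : ℝ, 0 < C ∧ ∀ (k : ℕ), 2 ≤ k → ∀ (γ : ℝ), 0 < γ →
      ∀ (i : ℕ), 1 ≤ i → i ≤ k - 1 →
        |(Real.exp (Real.sqrt k * γ) - Real.exp (i * γ / Real.sqrt k)) /
            (Real.exp (γ / Real.sqrt k) - 1) -
          (Real.sqrt k / γ) * Real.exp (Real.sqrt k * γ)|
        ≤ C * ((Real.sqrt k / γ) * Real.exp (i * γ / Real.sqrt k) +
            Real.exp (Real.sqrt k * γ)) := by
  refine ⟨1, one_pos, ?_⟩
  intro k hk γ hγ i hi1 hi2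
  have hk0 : (0:ℝ) < (k:ℝ) := by exact_mod_cast Nat.lt_of_lt_of_le (by norm_num) hk
  have hs : 0 < Real.sqrt k := Real.sqrt_pos.mpr hk0
  have hx : 0 < γ / Real.sqrt k := div_pos hγ hs
  have h := tail_geom_key (γ / Real.sqrt k) (Real.exp (Real.sqrt k * γ))
    (Real.exp (i * γ / Real.sqrt k)) hx (Real.exp_pos _) (Real.exp_pos _)
  have hdiv : ∀ A : ℝ, A / (γ / Real.sqrt k) = Real.sqrt k / γ * A := by
    intro A; field_simp
  rw [hdiv, hdiv] at h
  linarith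
end

section
/- Let (ξ_i) be i.i.d. real random variables with E ξ_0 = 0 and E ξ_0² < ∞, and let γ_n > 0 with γ_n → 0, k_n → ∞, √{k_n} γ_n → ∞. Then E[ (γ_n/√{k_n})·e^{-√{k_n} γ_n}·( (1/√{k_n})·∑_{j=1}^{k_n−1} e^{jγ_n/√{k_n}} ∑_{i=1}^{j} ξ_{k_n−i} − (e^{√{k_n} γ_n}/γ_n)·∑_{i=1}^{k_n−1} ξ_i ) ]² → 0. -/
/-!
Exchanging the order of summation turns the bracket into `∑ p, b p * ξ p` with deterministic
weights `b p = (a * T (k - p) - exp a ^ k) / (√k * exp a ^ k)`, where `a = γ / √k` and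
`T i = ∑_{i ≤ j < k} exp a ^ j`; by independence its second moment is `E ξ₀² * ∑ p, b p ^ 2`.
Since `a * T i` is a Riemann sum for `∫_i^k a e^{ax} dx = exp a ^ k - exp a ^ i`, one gets
`|a * T i - exp a ^ k| ≤ exp a ^ i + a * exp a ^ k`, whence `∑ p, b p ^ 2 ≤ 2γ²/k + 1/(√k γ) → 0`.
-/

open Filter MeasureTheory ProbabilityTheory Finset Real

theorem sum_Ico_one_reflect {M : Type*} [AddCommMonoid M] (f : ℕ → M) (n : ℕ) :
    ∑ i ∈ Ico 1 n, f (n - i) = ∑ i ∈ Ico 1 n, f i := by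
  refine sum_nbij' (n - ·) (n - ·) ?_ ?_ ?_ ?_ fun _ _ => rfl <;>
    intro i hi <;> simp only [mem_Ico] at * <;> omega

theorem sum_Ico_mul_sum_Icc_sub_eq {R : Type*} [NonUnitalNonAssocSemiring R] (f g : ℕ → R)
    (n : ℕ) :
    ∑ j ∈ Ico 1 n, f j * ∑ i ∈ Icc 1 j, g (n - i) =
      ∑ p ∈ Ico 1 n, (∑ j ∈ Ico (n - p) n, f j) * g p := by
  calc ∑ j ∈ Ico 1 n, f j * ∑ i ∈ Icc 1 j, g (n - i)
      = ∑ i ∈ Ico 1 n, ∑ j ∈ Ico i n, f j * g (n - i) := by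
        simp_rw [mul_sum]
        exact sum_comm' fun j i => by simp only [mem_Ico, mem_Icc]; omega
    _ = ∑ i ∈ Ico 1 n, (∑ j ∈ Ico (n - (n - i)) n, f j) * g (n - i) := by
        refine sum_congr rfl fun i hi => ?_
        rw [Nat.sub_sub_self (mem_Ico.1 hi).2.le, sum_mul]
    _ = _ := sum_Ico_one_reflect (fun p => (∑ j ∈ Ico (n - p) n, f j) * g p) n

theorem integral_sq_sum_mul_eq {Ω ι : Type*} [MeasurableSpace Ω] {μ : Measure Ω}
    [IsProbabilityMeasure μ] {ξ : ι → Ω → ℝ} (hindep : Pairwise fun i j => IndepFun (ξ i) (ξ j) μ)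
    (hmean : ∀ i, μ[ξ i] = 0) (hL2 : ∀ i, MemLp (ξ i) 2 μ) (s : Finset ι) (b : ι → ℝ) :
    ∫ ω, (∑ i ∈ s, b i * ξ i ω) ^ 2 ∂μ = ∑ i ∈ s, b i ^ 2 * ∫ ω, ξ i ω ^ 2 ∂μ := by
  set X : ι → Ω → ℝ := fun i ω => b i * ξ i ω
  have hX : ∀ i, MemLp (X i) 2 μ := fun i => (hL2 i).const_mul (b i)
  have hsum_mean : μ[∑ i ∈ s, X i] = 0 := by
    simp only [Finset.sum_apply]
    rw [integral_finsetSum s fun i _ => ((hX i).integrable one_le_two)]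
    simp [X, integral_const_mul, hmean]
  calc ∫ ω, (∑ i ∈ s, b i * ξ i ω) ^ 2 ∂μ = Var[∑ i ∈ s, X i; μ] := by
        rw [variance_of_integral_eq_zero (memLp_finsetSum' s fun i _ => hX i).aemeasurable
          hsum_mean]
        simp [X]
    _ = ∑ i ∈ s, Var[X i; μ] :=
        IndepFun.variance_sum (fun i _ => hX i) fun i _ j _ hij =>
          (hindep hij).comp (measurable_const_mul (b i)) (measurable_const_mul (b j))
    _ = ∑ i ∈ s, b i ^ 2 * ∫ ω, ξ i ω ^ 2 ∂μ := by
        refine sum_congr rfl fun i _ => ?_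
        rw [variance_const_mul, variance_of_integral_eq_zero (hL2 i).aemeasurable (hmean i)]

/-- Left and right Riemann sums of `a e^{ax}` on `[i, n]` bracket its integral
`exp a ^ n - exp a ^ i`. -/
theorem exp_pow_sub_mul_sum_Ico_mem_Icc (a : ℝ) {i n : ℕ} (hin : i ≤ n) :
    exp a ^ n - exp a ^ i - a * ∑ j ∈ Ico i n, exp a ^ j ∈
      Set.Icc 0 (a * (exp a ^ n - exp a ^ i)) := by
  set r := exp a
  set T := ∑ j ∈ Ico i n, r ^ j
  have hgeom : T * (r - 1) = r ^ n - r ^ i := geom_sum_Ico_mul r hin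
  have hT : 0 ≤ T := sum_nonneg fun j _ => pow_nonneg (exp_pos a).le j
  have hlow : a ≤ r - 1 := by linarith [add_one_le_exp a]
  have hup : r - 1 ≤ a * r := by
    have := mul_le_mul_of_nonneg_right (one_sub_le_exp_neg a) (exp_pos a).le
    rw [← exp_add, neg_add_cancel, exp_zero] at this
    linarith
  rw [← hgeom]
  constructor <;> nlinarith

theorem exp_two_mul_pow (a : ℝ) (n : ℕ) : exp (2 * a) ^ n = (exp a ^ n) ^ 2 := by
  rw [two_mul, exp_add, ← sq, ← pow_mul, ← pow_mul, mul_comm]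

theorem sum_sq_mul_sum_Ico_exp_pow_sub_le {a : ℝ} (ha : 0 < a) (n : ℕ) :
    ∑ i ∈ Ico 1 n, (a * ∑ j ∈ Ico i n, exp a ^ j - exp a ^ n) ^ 2 ≤
      (exp a ^ n) ^ 2 * (1 / a + 2 * a ^ 2 * n) := by
  have hterm : ∀ i ∈ Ico 1 n, (a * ∑ j ∈ Ico i n, exp a ^ j - exp a ^ n) ^ 2 ≤
      2 * exp (2 * a) ^ i + 2 * (a * exp a ^ n) ^ 2 := by
    intro i hi
    obtain ⟨h₀, h₁⟩ := exp_pow_sub_mul_sum_Ico_mem_Icc a (mem_Ico.1 hi).2.le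
    set D := exp a ^ n - exp a ^ i - a * ∑ j ∈ Ico i n, exp a ^ j
    have hD : D ≤ a * exp a ^ n := by nlinarith [pow_pos (exp_pos a) i]
    calc (a * ∑ j ∈ Ico i n, exp a ^ j - exp a ^ n) ^ 2 = (exp a ^ i + D) ^ 2 := by ring
      _ ≤ 2 * (exp a ^ i) ^ 2 + 2 * D ^ 2 := by nlinarith [sq_nonneg (exp a ^ i - D)]
      _ ≤ 2 * exp (2 * a) ^ i + 2 * (a * exp a ^ n) ^ 2 := by
        rw [exp_two_mul_pow]; gcongr
  have hgeom : 2 * a * ∑ i ∈ Ico 1 n, exp (2 * a) ^ i ≤ (exp a ^ n) ^ 2 := by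
    rcases Nat.eq_zero_or_pos n with rfl | hn
    · simp
    have := (exp_pow_sub_mul_sum_Ico_mem_Icc (2 * a) hn).1
    rw [exp_two_mul_pow] at this
    nlinarith [pow_pos (exp_pos (2 * a)) 1]
  have hcard : ((Ico 1 n).card : ℝ) ≤ n := by simp
  calc _ ≤ ∑ i ∈ Ico 1 n, (2 * exp (2 * a) ^ i + 2 * (a * exp a ^ n) ^ 2) := sum_le_sum hterm
    _ = 2 * ∑ i ∈ Ico 1 n, exp (2 * a) ^ i + (Ico 1 n).card * (2 * (a * exp a ^ n) ^ 2) := by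
        rw [sum_add_distrib, mul_sum, sum_const, nsmul_eq_mul]
    _ ≤ (exp a ^ n) ^ 2 / a + n * (2 * (a * exp a ^ n) ^ 2) := by
        gcongr
        rw [le_div_iff₀ ha]; linarith
    _ = _ := by ring

noncomputable def innovationWeight (γ : ℝ) (k p : ℕ) : ℝ :=
  (γ / √k * ∑ j ∈ Ico (k - p) k, exp (γ / √k) ^ j - exp (γ / √k) ^ k) / (√k * exp (γ / √k) ^ k)

theorem weighted_partial_sums_eq (x : ℕ → ℝ) {γ : ℝ} (hγ : 0 < γ) {k : ℕ} (hk : 0 < k) :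
    (γ / √k) * exp (-√k * γ) *
        ((1 / √k) * ∑ j ∈ Icc 1 (k - 1), exp (j * γ / √k) * ∑ i ∈ Icc 1 j, x (k - i) -
          (exp (√k * γ) / γ) * ∑ i ∈ Icc 1 (k - 1), x i) =
      ∑ p ∈ Ico 1 k, innovationWeight γ k p * x p := by
  have hs : 0 < √k := sqrt_pos.2 (Nat.cast_pos.2 hk)
  have hIcc : Icc 1 (k - 1) = Ico 1 k := by ext; simp only [mem_Icc, mem_Ico]; omega
  have hexp : ∀ j : ℕ, exp (j * γ / √k) = exp (γ / √k) ^ j := fun j => by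
    rw [mul_div_assoc, exp_nat_mul]
  have hR : exp (√k * γ) = exp (γ / √k) ^ k := by
    rw [← exp_nat_mul]
    congr 1
    field_simp
    exact sq_sqrt (Nat.cast_nonneg k)
  simp_rw [hIcc, hexp, sum_Ico_mul_sum_Icc_sub_eq (fun j => exp (γ / √k) ^ j) x k, neg_mul,
    exp_neg, hR]
  rw [mul_sum, mul_sum, ← sum_sub_distrib, mul_sum]
  refine sum_congr rfl fun p _ => ?_
  rw [innovationWeight]
  field_simp

theorem sum_sq_innovationWeight_le {γ : ℝ} (hγ : 0 < γ) {k : ℕ} (hk : 0 < k) :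
    ∑ p ∈ Ico 1 k, innovationWeight γ k p ^ 2 ≤ 2 * γ ^ 2 / k + 1 / (√k * γ) := by
  have hs : 0 < √k := sqrt_pos.2 (Nat.cast_pos.2 hk)
  have hR : 0 < exp (γ / √k) ^ k := pow_pos (exp_pos _) k
  simp_rw [innovationWeight, div_pow]
  rw [← sum_div, sum_Ico_one_reflect
    (fun i => (γ / √k * ∑ j ∈ Ico i k, exp (γ / √k) ^ j - exp (γ / √k) ^ k) ^ 2) k,
    div_le_iff₀ (by positivity)]
  refine (sum_sq_mul_sum_Ico_exp_pow_sub_le (div_pos hγ hs) k).trans (le_of_eq ?_)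
  field_simp
  linear_combination (-2 * γ ^ 3 * (√k ^ 2 + k)) * sq_sqrt (Nat.cast_nonneg (α := ℝ) k)

theorem integral_sq_weighted_partial_sums_le {Ω : Type*} [MeasurableSpace Ω] {μ : Measure Ω}
    [IsProbabilityMeasure μ] {ξ : ℕ → Ω → ℝ} (hindep : iIndepFun ξ μ)
    (hid : ∀ i, IdentDistrib (ξ i) (ξ 0) μ μ) (hmean : μ[ξ 0] = 0) (hL2 : MemLp (ξ 0) 2 μ)
    {γ : ℝ} (hγ : 0 < γ) {k : ℕ} (hk : 0 < k) :
    ∫ ω, ((γ / √k) * exp (-√k * γ) *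
        ((1 / √k) * ∑ j ∈ Icc 1 (k - 1), exp (j * γ / √k) * ∑ i ∈ Icc 1 j, ξ (k - i) ω -
          (exp (√k * γ) / γ) * ∑ i ∈ Icc 1 (k - 1), ξ i ω)) ^ 2 ∂μ ≤
      (2 * γ ^ 2 / k + 1 / (√k * γ)) * ∫ ω, ξ 0 ω ^ 2 ∂μ := by
  have hsq : ∀ i, ∫ ω, ξ i ω ^ 2 ∂μ = ∫ ω, ξ 0 ω ^ 2 ∂μ := fun i =>
    ((hid i).comp (measurable_id.pow_const 2)).integral_eq
  have hweights := fun ω => weighted_partial_sums_eq (fun i => ξ i ω) hγ hk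
  simp only [hweights]
  rw [integral_sq_sum_mul_eq (fun i j hij => hindep.indepFun hij)
    (fun i => (hid i).integral_eq.trans hmean) (fun i => (hid i).symm.memLp_snd hL2)]
  simp_rw [hsq, ← sum_mul]
  exact mul_le_mul_of_nonneg_right (sum_sq_innovationWeight_le hγ hk)
    (integral_nonneg fun ω => sq_nonneg _)

open Filter MeasureTheory ProbabilityTheory in
theorem lemApp_L2_general {Ω : Type*} [MeasurableSpace Ω] (μ : Measure Ω) [IsProbabilityMeasure μ]
    (ξ : ℕ → Ω → ℝ)
    (hindep : iIndepFun ξ μ)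
    (hid : ∀ i, IdentDistrib (ξ i) (ξ 0) μ μ)
    (hmean : μ[ξ 0] = 0) (hL2 : MemLp (ξ 0) 2 μ)
    (γ : ℕ → ℝ) (k : ℕ → ℕ) (hγpos : ∀ n, 0 < γ n)
    (hγ0 : Tendsto γ atTop (nhds 0)) (hk : Tendsto k atTop atTop)
    (hkγ : Tendsto (fun n => Real.sqrt (k n) * γ n) atTop atTop) :
    Tendsto (fun n => ∫ ω,
        ((γ n / Real.sqrt (k n)) * Real.exp (-(Real.sqrt (k n)) * γ n) *
          ((1 / Real.sqrt (k n)) *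
              ∑ j ∈ Finset.Icc 1 (k n - 1), Real.exp (j * γ n / Real.sqrt (k n)) *
                ∑ i ∈ Finset.Icc 1 j, ξ (k n - i) ω -
            (Real.exp (Real.sqrt (k n) * γ n) / γ n) *
              ∑ i ∈ Finset.Icc 1 (k n - 1), ξ i ω)) ^ 2 ∂μ)
      atTop (nhds 0) := by
  have hbound : Tendsto (fun n => 2 * γ n ^ 2 / k n + 1 / (√(k n) * γ n)) atTop (nhds 0) := by
    have h₁ : Tendsto (fun n => 2 * γ n ^ 2 / k n) atTop (nhds 0) := by
      simpa using ((hγ0.pow 2).const_mul 2).div_atTop (tendsto_natCast_atTop_atTop.comp hk)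
    simpa only [one_div, add_zero, Pi.inv_apply] using h₁.add hkγ.inv_tendsto_atTop
  refine squeeze_zero' (.of_forall fun n => integral_nonneg fun ω => sq_nonneg _)
    ?_ (by simpa only [zero_mul] using hbound.mul_const (∫ ω, ξ 0 ω ^ 2 ∂μ))
  filter_upwards [hk.eventually_gt_atTop 0] with n hn
  exact integral_sq_weighted_partial_sums_le hindep hid hmean hL2 (hγpos n) hn

open Filter MeasureTheory ProbabilityTheory in
theorem lemApp_L2 {Ω : Type*} [MeasurableSpace Ω] (μ : Measure Ω) [IsProbabilityMeasure μ]
    (ξ : ℕ → Ω → ℝ) (hmeas : ∀ i, Measurable (ξ i))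
    (hindep : iIndepFun ξ μ)
    (hid : ∀ i, IdentDistrib (ξ i) (ξ 0) μ μ)
    (hmean : μ[ξ 0] = 0) (hL2 : MemLp (ξ 0) 2 μ)
    (γ : ℕ → ℝ) (k : ℕ → ℕ) (hγpos : ∀ n, 0 < γ n)
    (hγ0 : Tendsto γ atTop (nhds 0)) (hk : Tendsto k atTop atTop)
    (hkγ : Tendsto (fun n => Real.sqrt (k n) * γ n) atTop atTop) :
    Tendsto (fun n => ∫ ω,
        ((γ n / Real.sqrt (k n)) * Real.exp (-(Real.sqrt (k n)) * γ n) *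
          ((1 / Real.sqrt (k n)) *
              ∑ j ∈ Finset.Icc 1 (k n - 1), Real.exp (j * γ n / Real.sqrt (k n)) *
                ∑ i ∈ Finset.Icc 1 j, ξ (k n - i) ω -
            (Real.exp (Real.sqrt (k n) * γ n) / γ n) *
              ∑ i ∈ Finset.Icc 1 (k n - 1), ξ i ω)) ^ 2 ∂μ)
      atTop (nhds 0) :=
  lemApp_L2_general μ ξ hindep hid hmean hL2 γ k hγpos hγ0 hk hkγ
end

section
/- Let γ_n < 0, γ_n → 0, k_n → ∞, √{k_n}·γ_n → −∞. Then for each fixed i, the quantity (1/√{k_n})·∑_{j=i}^{k_n−1} e^{jγ_n/√{k_n}} − |γ_n|^{−1}·e^{iγ_n/√{k_n}} satisfies: its square summed over i = 1,…,k_n−1, multiplied by 2|γ_n|³/√{k_n}, tends to 0 as n → ∞. -/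
/-!
Put `s = √k`, `t = |γ| / s` and `q = e^{-t}`. By the geometric sum, the `i`-th deviation
equals `c qⁱ - d` with `c = 1 / (s (1 - q)) - 1 / |γ|` and `d = qᵏ / (s (1 - q))`.
Since `1 - q = t + O(t²)`, `c = O(1 / s)`, and the geometric sum over `i` is `O(1 / t)`.
Hence the weighted sum of squares is at most `32 γ² + 16 |sγ| e^{2sγ}`, which tends to `0`
because `γ → 0` and `sγ → -∞`.
-/

open Filter Finset Real Topology

lemma Nat.Icc_sub_one_right_eq_Ico_of_pos {a : ℕ} (ha : 0 < a) (b : ℕ) :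
    Icc a (b - 1) = Ico a b := by
  ext
  simp only [mem_Icc, mem_Ico]
  omega

section TailGeometricSum

variable {q s a : ℝ}

lemma scaled_tail_geom_sum_sub_eq (hq : q ≠ 1) (hs : s ≠ 0) {i k : ℕ} (hi : 0 < i)
    (hik : i ≤ k) :
    1 / s * ∑ j ∈ Icc i (k - 1), q ^ j - a⁻¹ * q ^ i
      = (1 / (s * (1 - q)) - a⁻¹) * q ^ i - q ^ k / (s * (1 - q)) := by
  have : 1 - q ≠ 0 := sub_ne_zero.2 hq.symm
  rw [Nat.Icc_sub_one_right_eq_Ico_of_pos hi, geom_sum_Ico' hq hik]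
  field_simp
  ring

lemma sum_sq_scaled_tail_geom_sum_sub_le (hq0 : 0 ≤ q) (hq1 : q < 1) (hs : s ≠ 0) (k : ℕ) :
    ∑ i ∈ Icc 1 (k - 1), (1 / s * ∑ j ∈ Icc i (k - 1), q ^ j - a⁻¹ * q ^ i) ^ 2
      ≤ 2 * (1 / (s * (1 - q)) - a⁻¹) ^ 2 * (1 / (1 - q))
        + 2 * k * (q ^ k / s) ^ 2 * (1 / (1 - q)) ^ 2 := by
  set c := 1 / (s * (1 - q)) - a⁻¹
  set d := q ^ k / (s * (1 - q))
  have hterm : ∀ i ∈ Icc 1 (k - 1),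
      (1 / s * ∑ j ∈ Icc i (k - 1), q ^ j - a⁻¹ * q ^ i) ^ 2 ≤ 2 * c ^ 2 * q ^ i + 2 * d ^ 2 := by
    intro i hi
    obtain ⟨hi1, hik⟩ := mem_Icc.1 hi
    rw [scaled_tail_geom_sum_sub_eq hq1.ne hs hi1 (by omega)]
    have hqi : (q ^ i) ^ 2 ≤ q ^ i :=
      pow_le_of_le_one (pow_nonneg hq0 i) (pow_le_one₀ hq0 hq1.le) two_ne_zero
    nlinarith [sq_nonneg (c * q ^ i + d), sq_nonneg c]
  have hgeom : ∑ i ∈ Icc 1 (k - 1), q ^ i ≤ 1 / (1 - q) := by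
    rw [Nat.Icc_sub_one_right_eq_Ico_of_pos one_pos]
    refine (geom_sum_Ico_le_of_lt_one hq0 hq1).trans ?_
    gcongr
    linarith
  have hcard : (#(Icc 1 (k - 1)) : ℝ) ≤ k := by
    rw [Nat.card_Icc]
    exact_mod_cast (by omega : k - 1 + 1 - 1 ≤ k)
  calc _ ≤ ∑ i ∈ Icc 1 (k - 1), (2 * c ^ 2 * q ^ i + 2 * d ^ 2) := sum_le_sum hterm
    _ = 2 * c ^ 2 * ∑ i ∈ Icc 1 (k - 1), q ^ i + #(Icc 1 (k - 1)) * (2 * d ^ 2) := by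
      rw [sum_add_distrib, ← mul_sum, sum_const, nsmul_eq_mul]
    _ ≤ 2 * c ^ 2 * (1 / (1 - q)) + k * (2 * d ^ 2) := by gcongr
    _ = _ := by simp only [d, div_eq_mul_inv, mul_inv, one_mul]; ring

end TailGeometricSum

lemma abs_one_sub_exp_neg_sub_le {t : ℝ} (ht : |t| ≤ 1) : |1 - exp (-t) - t| ≤ t ^ 2 := by
  rw [← abs_neg, ← neg_sq]
  convert abs_exp_sub_one_sub_id_le (x := -t) (by rwa [abs_neg]) using 2
  ring

lemma sq_one_div_mul_sub_inv_mul_le {s t u : ℝ} (hs : 0 < s) (ht : 0 < t) (hu : t / 2 ≤ u)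
    (htu : |t - u| ≤ t ^ 2) : (1 / (s * u) - (s * t)⁻¹) ^ 2 ≤ (2 / s) ^ 2 := by
  have hu0 : 0 < u := by linarith
  rw [show 1 / (s * u) - (s * t)⁻¹ = (t - u) / (s * t * u) by field_simp, sq_le_sq,
    abs_div, abs_of_pos (by positivity : 0 < s * t * u), abs_of_pos (by positivity : 0 < 2 / s),
    div_le_iff₀ (by positivity)]
  calc |t - u| ≤ t ^ 2 := htu
    _ ≤ 2 / s * (s * t * u) := by
      rw [show 2 / s * (s * t * u) = t * (2 * u) by field_simp]
      nlinarith

lemma scaled_sum_sq_tail_exp_sum_sub_le {s t : ℝ} (hs : 0 < s) (ht0 : 0 < t) (ht1 : t ≤ 1 / 2)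
    (k : ℕ) :
    2 * (s * t) ^ 3 / s * ∑ i ∈ Icc 1 (k - 1),
        (1 / s * ∑ j ∈ Icc i (k - 1), exp (-t) ^ j - (s * t)⁻¹ * exp (-t) ^ i) ^ 2
      ≤ 32 * t ^ 2 + 16 * k * t * exp (-t) ^ (2 * k) := by
  set q := exp (-t)
  have hu : |1 - q - t| ≤ t ^ 2 := abs_one_sub_exp_neg_sub_le (by rw [abs_of_pos ht0]; linarith)
  have hut : t / 2 ≤ 1 - q := by nlinarith [(abs_le.1 hu).1]
  have hinv : 1 / (1 - q) ≤ 2 / t := by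
    rw [div_le_div_iff₀ (by linarith) ht0]; linarith
  have hc := sq_one_div_mul_sub_inv_mul_le hs ht0 hut (by rwa [abs_sub_comm])
  have hq1 : q < 1 := exp_lt_one_iff.2 (by linarith)
  calc _ ≤ 2 * (s * t) ^ 3 / s *
        (2 * (2 / s) ^ 2 * (2 / t) + 2 * k * (q ^ k / s) ^ 2 * (2 / t) ^ 2) := by
        gcongr
        refine (sum_sq_scaled_tail_geom_sum_sub_le (exp_pos _).le hq1 hs.ne' k).trans ?_
        gcongr
    _ = _ := by
      field_simp
      ring

lemma coefficient_deviation_sum_le {γ : ℝ} (hγ : γ < 0) (hγ1 : -(1 / 2) ≤ γ) (k : ℕ) :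
    2 * |γ| ^ 3 / √k * ∑ i ∈ Icc 1 (k - 1),
        (1 / √k * ∑ j ∈ Icc i (k - 1), exp (j * γ / √k) - |γ|⁻¹ * exp (i * γ / √k)) ^ 2
      ≤ 32 * γ ^ 2 + 16 * (-(√k * γ) * exp (2 * (√k * γ))) := by
  rcases k.eq_zero_or_pos with rfl | hk
  · simpa using sq_nonneg γ
  have hs : 1 ≤ √k := one_le_sqrt.2 (by exact_mod_cast hk)
  set t := -γ / √k with ht
  have hγt : |γ| = √k * t := by rw [abs_of_neg hγ, ht]; field_simp
  have ht0 : 0 < t := div_pos (by linarith) (by linarith)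
  have htγ : t ≤ -γ := div_le_self (by linarith) hs
  have hpow : ∀ j : ℕ, exp (j * γ / √k) = exp (-t) ^ j := fun j => by
    rw [← exp_nat_mul, ht]; ring_nf
  simp only [hpow, hγt]
  refine (scaled_sum_sq_tail_exp_sum_sub_le (by linarith) ht0 (by linarith) k).trans ?_
  have hk : (k : ℝ) * t = -(√k * γ) := by
    rw [ht, mul_div_assoc', mul_comm, mul_div_assoc, div_sqrt]; ring
  have hexp : exp (-t) ^ (2 * k) = exp (2 * (√k * γ)) := by
    rw [← exp_nat_mul]; congr 1; push_cast; linear_combination (-2) * hk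
  have ht2 : t ^ 2 ≤ γ ^ 2 := by nlinarith
  calc 32 * t ^ 2 + 16 * k * t * exp (-t) ^ (2 * k)
      = 32 * t ^ 2 + 16 * (-(√k * γ) * exp (2 * (√k * γ))) := by rw [hexp, ← hk]; ring
    _ ≤ _ := by gcongr

lemma tendsto_neg_mul_exp_two_mul_atBot :
    Tendsto (fun x : ℝ => -x * exp (2 * x)) atBot (𝓝 0) := by
  have h := ((tendsto_pow_mul_exp_neg_atTop_nhds_zero 1).comp
    (tendsto_neg_atBot_atTop.const_mul_atTop two_pos)).const_mul (1 / 2)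
  rw [mul_zero] at h
  refine h.congr fun x => ?_
  simp only [Function.comp_apply]
  ring_nf

open Filter in
theorem coefficient_deviation_limit_general (γ : ℕ → ℝ) (k : ℕ → ℕ)
    (hγneg : ∀ n, γ n < 0) (hγ0 : Tendsto γ atTop (nhds 0))
    (hkγ : Tendsto (fun n => Real.sqrt (k n) * γ n) atTop atBot) :
    Tendsto (fun n => (2 * |γ n| ^ 3 / Real.sqrt (k n)) *
        ∑ i ∈ Finset.Icc 1 (k n - 1),
          ((1 / Real.sqrt (k n)) *
              (∑ j ∈ Finset.Icc i (k n - 1), Real.exp (j * γ n / Real.sqrt (k n))) -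
            |γ n|⁻¹ * Real.exp (i * γ n / Real.sqrt (k n))) ^ 2)
      atTop (nhds 0) := by
  have hbound : Tendsto (fun n => 32 * γ n ^ 2
      + 16 * (-(√(k n) * γ n) * exp (2 * (√(k n) * γ n)))) atTop (𝓝 0) := by
    simpa using ((hγ0.pow 2).const_mul 32).add
      ((tendsto_neg_mul_exp_two_mul_atBot.comp hkγ).const_mul 16)
  refine tendsto_of_tendsto_of_tendsto_of_le_of_le' tendsto_const_nhds hbound
    (Eventually.of_forall fun n => by positivity) ?_
  filter_upwards [hγ0.eventually (eventually_ge_nhds (by norm_num : -(1 / 2 : ℝ) < 0))] with n hn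
  exact coefficient_deviation_sum_le (hγneg n) hn (k n)

open Filter in
theorem coefficient_deviation_limit (γ : ℕ → ℝ) (k : ℕ → ℕ)
    (hγneg : ∀ n, γ n < 0) (hγ0 : Tendsto γ atTop (nhds 0))
    (hk : Tendsto k atTop atTop)
    (hkγ : Tendsto (fun n => Real.sqrt (k n) * γ n) atTop atBot) :
    Tendsto (fun n => (2 * |γ n| ^ 3 / Real.sqrt (k n)) *
        ∑ i ∈ Finset.Icc 1 (k n - 1),
          ((1 / Real.sqrt (k n)) *
              (∑ j ∈ Finset.Icc i (k n - 1), Real.exp (j * γ n / Real.sqrt (k n))) -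
            |γ n|⁻¹ * Real.exp (i * γ n / Real.sqrt (k n))) ^ 2)
      atTop (nhds 0) :=
  coefficient_deviation_limit_general γ k hγneg hγ0 hkγ
end

section
/- Let N ≥ 1, δ > 0, 0 < t_1 < … < t_N < 1, and μ_1,…,μ_N reals. Let γ_n < 0 with γ_n → 0 and n|γ_n| → ∞, and set k(m) = ⌊n t_m⌋. Define c_i = ∑_{m : i ≤ k(m)−1} k(m)^{−1/4} μ_m e^{(k(m)−i)γ_n/√{k(m)}}. Then |γ_n|·∑_{i=1}^{k(N)−1} |c_i|^{2+δ} → 0 as n → ∞. -/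
/-!
Bound each `|c i|` by `A = ∑ m, k(m)^{-1/4} |μ m|`, so that `|c i|^{2+δ} ≤ A^{1+δ} |c i|`.
Swapping the sums, `∑ i |c i|` is at most `∑ m, k(m)^{-1/4} |μ m|` times a geometric series of
ratio `exp (γ / √k(m))`, whose sum is at most `√k(m) / |γ|`. Hence the quantity in question is at
most `(∑ m, k(m)^{-1/4} |μ m|)^{1+δ} ∑ m, k(m)^{1/4} |μ m|`, which is of order `n^{-δ/4}`
because `k(m) / n → t m > 0`.
-/

open Filter Finset Real Topology

lemma exp_neg_div_one_sub_exp_neg_le {a : ℝ} (ha : 0 < a) :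
    exp (-a) / (1 - exp (-a)) ≤ a⁻¹ := by
  have hea : a < exp a - 1 := by linarith [add_one_lt_exp ha.ne']
  calc exp (-a) / (1 - exp (-a)) = (exp a - 1)⁻¹ := by
        rw [exp_neg]; field_simp
    _ ≤ a⁻¹ := inv_anti₀ ha hea.le

lemma sum_Ico_exp_neg_mul_le {a : ℝ} (ha : 0 < a) (K : ℕ) :
    ∑ j ∈ Ico 1 K, exp (-(a * j)) ≤ a⁻¹ := by
  have hr0 : 0 ≤ exp (-a) := (exp_pos _).le
  have hr1 : exp (-a) < 1 := exp_lt_one_iff.mpr (neg_neg_of_pos ha)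
  calc ∑ j ∈ Ico 1 K, exp (-(a * j)) = ∑ j ∈ Ico 1 K, exp (-a) ^ j := by
        refine sum_congr rfl fun j _ => ?_
        rw [← exp_nat_mul]; ring_nf
    _ ≤ exp (-a) ^ 1 / (1 - exp (-a)) := geom_sum_Ico_le_of_lt_one hr0 hr1
    _ ≤ a⁻¹ := by simpa using exp_neg_div_one_sub_exp_neg_le ha

lemma abs_mul_sum_Ico_exp_le_sqrt (K : ℕ) {g : ℝ} (hg : g < 0) :
    |g| * ∑ i ∈ Ico 1 K, exp ((K - i) * g / √K) ≤ √K := by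
  rcases Nat.eq_zero_or_pos K with rfl | hK
  · simp
  have hs : 0 < √(K : ℝ) := sqrt_pos.mpr (by exact_mod_cast hK)
  have ha : 0 < |g| / √K := div_pos (abs_pos.mpr hg.ne) hs
  have hreflect : ∑ i ∈ Ico 1 K, exp ((K - i) * g / √K)
      = ∑ j ∈ Ico 1 K, exp (-(|g| / √K * j)) := by
    have h := sum_Ico_reflect (fun j : ℕ => exp (-(|g| / √K * j))) 1 (Nat.le_succ K)
    rw [show K + 1 - K = 1 by omega, show K + 1 - 1 = K by omega] at h
    rw [← h]
    refine sum_congr rfl fun i hi => ?_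
    rw [Nat.cast_sub (mem_Ico.mp hi).2.le, abs_of_neg hg]
    ring_nf
  rw [hreflect]
  calc |g| * ∑ j ∈ Ico 1 K, exp (-(|g| / √K * j)) ≤ |g| * (|g| / √K)⁻¹ :=
        mul_le_mul_of_nonneg_left (sum_Ico_exp_neg_mul_le ha K) (abs_nonneg g)
    _ = √K := by rw [inv_div, mul_div_cancel₀ _ (abs_pos.mpr hg.ne).ne']

lemma exp_sub_mul_div_sqrt_le_one {K i : ℕ} (hi : i ≤ K) {g : ℝ} (hg : g < 0) :
    exp ((K - i) * g / √K) ≤ 1 := by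
  rw [exp_le_one_iff]
  have : (i : ℝ) ≤ K := by exact_mod_cast hi
  exact div_nonpos_of_nonpos_of_nonneg (mul_nonpos_of_nonneg_of_nonpos (by linarith) hg.le)
    (sqrt_nonneg _)

lemma rpow_le_rpow_sub_one_mul {x A p : ℝ} (hx : 0 ≤ x) (hxA : x ≤ A) (hp : 1 ≤ p) :
    x ^ p ≤ A ^ (p - 1) * x := by
  calc x ^ p = x ^ (p - 1) * x := by
        rw [← rpow_add_one' hx (by linarith), sub_add_cancel]
    _ ≤ A ^ (p - 1) * x := by gcongr

section
variable {ι : Type*} [Fintype ι] (a : ι → ℝ) (K : ι → ℕ) {g : ℝ}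

lemma sum_filter_mul_exp_le_sum_abs (hg : g < 0) (i : ℕ) :
    ∑ m ∈ univ.filter (fun m => i ≤ K m - 1), |a m| * exp ((K m - i) * g / √(K m))
      ≤ ∑ m, |a m| := by
  calc _ ≤ ∑ m ∈ univ.filter (fun m => i ≤ K m - 1), |a m| := by
        refine sum_le_sum fun m hm => ?_
        have hi : i ≤ K m := by have := (mem_filter.mp hm).2; omega
        exact mul_le_of_le_one_right (abs_nonneg _) (exp_sub_mul_div_sqrt_le_one hi hg)
    _ ≤ ∑ m, |a m| := sum_le_sum_of_subset_of_nonneg (filter_subset _ _) fun _ _ _ => abs_nonneg _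

lemma abs_mul_sum_Icc_sum_filter_le (hg : g < 0) (L : ℕ) :
    |g| * ∑ i ∈ Icc 1 L, ∑ m ∈ univ.filter (fun m => i ≤ K m - 1),
        |a m| * exp ((K m - i) * g / √(K m)) ≤ ∑ m, |a m| * √(K m) := by
  rw [sum_comm' (t' := univ) (s' := fun m => (Icc 1 L).filter (fun i => i ≤ K m - 1))
    (by intro i m; simp only [mem_filter, mem_univ, true_and]; tauto), mul_sum]
  refine sum_le_sum fun m _ => ?_
  rw [← mul_sum, mul_left_comm]
  refine mul_le_mul_of_nonneg_left ((mul_le_mul_of_nonneg_left ?_ (abs_nonneg g)).trans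
    (abs_mul_sum_Ico_exp_le_sqrt (K m) hg)) (abs_nonneg _)
  refine sum_le_sum_of_subset_of_nonneg (fun i hi => ?_) fun _ _ _ => (exp_pos _).le
  simp only [mem_filter, mem_Icc, mem_Ico] at hi ⊢
  omega

lemma abs_mul_sum_rpow_le {p : ℝ} (hp : 1 ≤ p) (hg : g < 0) (c : ℕ → ℝ)
    (hc : ∀ i, c i = ∑ m ∈ univ.filter (fun m => i ≤ K m - 1),
      a m * exp ((K m - i) * g / √(K m))) (L : ℕ) :
    |g| * ∑ i ∈ Icc 1 L, |c i| ^ p ≤ (∑ m, |a m|) ^ (p - 1) * ∑ m, |a m| * √(K m) := by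
  set d : ℕ → ℝ := fun i => ∑ m ∈ univ.filter (fun m => i ≤ K m - 1),
    |a m| * exp ((K m - i) * g / √(K m))
  have hcd : ∀ i, |c i| ≤ d i := fun i => by
    rw [hc]
    refine (abs_sum_le_sum_abs _ _).trans_eq (sum_congr rfl fun m _ => ?_)
    rw [abs_mul, abs_of_pos (exp_pos _)]
  have hA : 0 ≤ ∑ m, |a m| := sum_nonneg fun _ _ => abs_nonneg _
  calc |g| * ∑ i ∈ Icc 1 L, |c i| ^ p ≤ |g| * ∑ i ∈ Icc 1 L, (∑ m, |a m|) ^ (p - 1) * d i := by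
        gcongr with i
        exact (rpow_le_rpow_sub_one_mul (abs_nonneg _)
          ((hcd i).trans (sum_filter_mul_exp_le_sum_abs a K hg i)) hp).trans
          (mul_le_mul_of_nonneg_left (hcd i) (rpow_nonneg hA _))
    _ = (∑ m, |a m|) ^ (p - 1) * (|g| * ∑ i ∈ Icc 1 L, d i) := by
        rw [← mul_sum]; ring
    _ ≤ _ := by gcongr; exact abs_mul_sum_Icc_sum_filter_le a K hg L

noncomputable def lyapunovBound (μ : ι → ℝ) (q : ℝ) (y : ι → ℝ) : ℝ :=
  (∑ m, |y m ^ (-(1/4 : ℝ)) * μ m|) ^ q * ∑ m, |y m ^ (-(1/4 : ℝ)) * μ m| * √(y m)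

lemma lyapunovBound_const_mul (μ : ι → ℝ) (q : ℝ) {y : ι → ℝ} (hy : ∀ m, 0 ≤ y m)
    {n : ℝ} (hn : 0 < n) :
    lyapunovBound μ q (fun m => n * y m) = n ^ ((1 - q) / 4) * lyapunovBound μ q y := by
  have hs : 0 ≤ n ^ (-(1/4 : ℝ)) := rpow_nonneg hn.le _
  simp only [lyapunovBound, mul_rpow hn.le (hy _), sqrt_mul hn.le, mul_assoc, abs_mul,
    abs_of_nonneg hs, ← mul_sum]
  rw [mul_rpow hs (sum_nonneg fun _ _ => by positivity), ← rpow_mul hn.le, sqrt_eq_rpow]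
  simp only [mul_left_comm _ (n ^ (1/2 : ℝ)), ← mul_sum]
  rw [mul_mul_mul_comm, ← mul_assoc, ← rpow_add hn, ← rpow_add hn]
  ring_nf

lemma tendsto_lyapunovBound_zero (μ : ι → ℝ) {q : ℝ} (hq : 1 < q) {t : ι → ℝ}
    (ht : ∀ m, 0 < t m) {k : ι → ℕ → ℕ}
    (hk : ∀ m, Tendsto (fun n => (k m n : ℝ) / n) atTop (𝓝 (t m))) :
    Tendsto (fun n => lyapunovBound μ q (fun m => k m n)) atTop (𝓝 0) := by
  have hF : Tendsto (fun n => lyapunovBound μ q (fun m => (k m n : ℝ) / n)) atTop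
      (𝓝 (lyapunovBound μ q t)) := by
    have hw : ∀ m, Tendsto (fun n => |((k m n : ℝ) / n) ^ (-(1/4 : ℝ)) * μ m|) atTop
        (𝓝 |t m ^ (-(1/4 : ℝ)) * μ m|) :=
      fun m => (((hk m).rpow_const (Or.inl (ht m).ne')).mul_const _).abs
    exact ((tendsto_finsetSum _ fun m _ => hw m).rpow_const (Or.inr (by linarith))).mul
      (tendsto_finsetSum _ fun m _ => (hw m).mul (hk m).sqrt)
  have hpow : Tendsto (fun n : ℕ => (n : ℝ) ^ ((1 - q) / 4)) atTop (𝓝 0) := by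
    refine ((tendsto_rpow_neg_atTop (y := (q - 1) / 4) (by linarith)).comp
      tendsto_natCast_atTop_atTop).congr fun n => ?_
    simp only [Function.comp_apply]; ring_nf
  refine (zero_mul (M₀ := ℝ) _ ▸ hpow.mul hF).congr' ?_
  filter_upwards [eventually_gt_atTop 0] with n hn
  have hn' : (0 : ℝ) < n := by exact_mod_cast hn
  have := lyapunovBound_const_mul μ q (y := fun m => (k m n : ℝ) / n)
    (fun m => by positivity) hn'
  simp only [mul_div_cancel₀ _ hn'.ne'] at this
  exact this.symm

end

open Filter in
theorem lyapunov_coefficient_bound (N : ℕ) (hN : 1 ≤ N) (δ : ℝ) (hδ : 0 < δ)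
    (t : Fin N → ℝ) (ht0 : ∀ m, 0 < t m)
    (μc : Fin N → ℝ) (γ : ℕ → ℝ) (hγneg : ∀ n, γ n < 0)
    (k : Fin N → ℕ → ℕ) (hk : ∀ m n, k m n = ⌊(n : ℝ) * t m⌋₊)
    (c : ℕ → ℕ → ℝ)
    (hc : ∀ n i, c n i = ∑ m ∈ Finset.univ.filter (fun m => i ≤ k m n - 1),
      ((k m n : ℝ) ^ (-(1/4 : ℝ))) * μc m *
        Real.exp (((k m n : ℝ) - i) * γ n / Real.sqrt (k m n))) :
    Tendsto (fun n => |γ n| *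
        ∑ i ∈ Finset.Icc 1 (k ⟨N - 1, by omega⟩ n - 1), |c n i| ^ (2 + δ))
      atTop (nhds 0) := by
  have hbound : ∀ n, |γ n| * ∑ i ∈ Icc 1 (k ⟨N - 1, by omega⟩ n - 1), |c n i| ^ (2 + δ)
      ≤ lyapunovBound μc (2 + δ - 1) (fun m => k m n) := fun n =>
    abs_mul_sum_rpow_le (fun m => (k m n : ℝ) ^ (-(1/4 : ℝ)) * μc m) (fun m => k m n)
      (by linarith) (hγneg n) (c n) (hc n) _
  have hk_div : ∀ m, Tendsto (fun n => (k m n : ℝ) / n) atTop (𝓝 (t m)) := fun m => by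
    simp only [hk, mul_comm _ (t m)]
    exact (tendsto_nat_floor_mul_div_atTop (ht0 m).le).comp tendsto_natCast_atTop_atTop
  exact squeeze_zero (fun n => by positivity) hbound
    (tendsto_lyapunovBound_zero μc (by linarith) ht0 hk_div)
end
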